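/- arXiv:2203.04593 — 4 statements merged into one kernel-verified Lean document; each statement's English description precedes it below -/
import Mathlib

section
/- Let U be a real normed space, let λ_1,…,λ_M ∈ U* and μ ∈ U* be continuous linear functionals. Suppose d := inf over all coefficient vectors c ∈ ℝ^M of ‖μ − Σ_{j=1}^M c_j·λ_j‖_{U*} is strictly positive. Then every bump function f ∈ U for μ (i.e. μ(f) = 1 and λ_j(f) = 0 for all j) satisfies ‖f‖_U ≥ 1/d; that is, the best possible power function bounds from below the reciprocal of the best possible bump-function norm. -/
/-!
Every functional `μ - ∑ j, c j • lam j` takes the value `1` at a bump function `f`, so its operator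
norm is at least `1 / ‖f‖`. Taking the infimum over `c` gives `‖f‖⁻¹ ≤ d`, which inverts to
`1 / d ≤ ‖f‖` because `‖f‖ > 0`.
-/

section BumpFunction

variable {𝕜 E : Type*} [NontriviallyNormedField 𝕜] [SeminormedAddCommGroup E] [NormedSpace 𝕜 E]

theorem ContinuousLinearMap.inv_norm_le_opNorm_of_apply_eq_one {φ : E →L[𝕜] 𝕜} {f : E}
    (hφf : φ f = 1) : ‖f‖⁻¹ ≤ ‖φ‖ := by
  simpa [hφf] using φ.ratio_le_opNorm f

theorem sub_sum_smul_apply_eq_one_of_bump {ι : Type*} [Fintype ι] {lam : ι → E →L[𝕜] 𝕜}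
    {μ : E →L[𝕜] 𝕜} {f : E} (hμf : μ f = 1) (hlamf : ∀ j, lam j f = 0) (c : ι → 𝕜) :
    (μ - ∑ j, c j • lam j) f = 1 := by
  simp [hμf, hlamf]

theorem inv_norm_le_iInf_norm_sub_sum_smul_of_bump {ι : Type*} [Fintype ι]
    {lam : ι → E →L[𝕜] 𝕜} {μ : E →L[𝕜] 𝕜} {f : E} (hμf : μ f = 1) (hlamf : ∀ j, lam j f = 0) :
    ‖f‖⁻¹ ≤ ⨅ c : ι → 𝕜, ‖μ - ∑ j, c j • lam j‖ :=
  le_ciInf fun c =>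
    ContinuousLinearMap.inv_norm_le_opNorm_of_apply_eq_one
      (sub_sum_smul_apply_eq_one_of_bump hμf hlamf c)

end BumpFunction

theorem best_power_function_bounds_bump_norm_general
    {U : Type*} [NormedAddCommGroup U] [NormedSpace ℝ U]
    (M : ℕ) (lam : Fin M → (U →L[ℝ] ℝ)) (μ : U →L[ℝ] ℝ)
    (d : ℝ) (hd : d = ⨅ c : Fin M → ℝ, ‖μ - ∑ j, c j • lam j‖)
    (f : U) (hμf : μ f = 1) (hlamf : ∀ j, lam j f = 0) :
    1 / d ≤ ‖f‖ := by
  have hf : 0 < ‖f‖ := norm_pos_iff.mpr fun h => by simp [h] at hμf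
  have hfd : ‖f‖⁻¹ ≤ d := hd ▸ inv_norm_le_iInf_norm_sub_sum_smul_of_bump hμf hlamf
  rw [one_div]
  exact inv_le_of_inv_le₀ hf hfd

/-- If the best possible power function value
`d = inf_{c ∈ ℝ^M} ‖μ - ∑ j, c j • lam j‖` is strictly positive, then every bump
function `f` for `μ` (with `μ f = 1` and `lam j f = 0` for all `j`) satisfies
`‖f‖ ≥ 1 / d`. -/
theorem best_power_function_bounds_bump_norm
    {U : Type*} [NormedAddCommGroup U] [NormedSpace ℝ U]
    (M : ℕ) (lam : Fin M → (U →L[ℝ] ℝ)) (μ : U →L[ℝ] ℝ)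
    (d : ℝ) (hd : d = ⨅ c : Fin M → ℝ, ‖μ - ∑ j, c j • lam j‖)
    (hdpos : 0 < d)
    (f : U) (hμf : μ f = 1) (hlamf : ∀ j, lam j f = 0) :
    1 / d ≤ ‖f‖ :=
  best_power_function_bounds_bump_norm_general M lam μ d hd f hμf hlamf
end

section
/- Let U be a real normed space, let λ_1,…,λ_M ∈ U* be continuous linear functionals and u_1,…,u_M ∈ U elements with the Lagrange (Kronecker) property λ_k(u_j) = δ_{jk} for all 1 ≤ j,k ≤ M, and let R(f) = Σ_{j=1}^M λ_j(f)·u_j be the associated interpolatory recovery map. Assume the bounded-error property ‖f − R(f)‖_U ≤ ‖f‖_U for all f ∈ U. Then for every μ ∈ U*: sup over f ∈ U with ‖f‖_U ≤ 1 of |μ(f) − μ(R(f))| equals sup over g ∈ U with ‖g‖_U ≤ 1 and λ_j(g) = 0 for all j of |μ(g)|. -/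
/-! The map `f ↦ f - R f` sends the unit ball into itself by the bounded-error property, lands in
the functions with vanishing data by the Lagrange property, and is the identity on them; moreover
`μ (f - R f) = μ f - μ (R f)`. Hence both suprema are taken over the same set of values. -/

section Lagrange

variable {𝕜 E F ι : Type*} [Ring 𝕜] [AddCommGroup E] [Module 𝕜 E]
  [FunLike F E 𝕜] [LinearMapClass F 𝕜 E 𝕜] [Fintype ι] [DecidableEq ι]
  {lam : ι → F} {u : ι → E}

theorem apply_sum_smul_of_lagrange (hLag : ∀ j k, lam k (u j) = if j = k then 1 else 0)
    (f : E) (k : ι) : lam k (∑ j, lam j f • u j) = lam k f := by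
  simp [map_sum, map_smul, hLag]

theorem apply_sub_sum_smul_of_lagrange (hLag : ∀ j k, lam k (u j) = if j = k then 1 else 0)
    (f : E) (k : ι) : lam k (f - ∑ j, lam j f • u j) = 0 := by
  rw [map_sub, apply_sum_smul_of_lagrange hLag, sub_self]

end Lagrange

/-- For an interpolatory recovery `R f = ∑ j, lam j f • u j` (Lagrange property
`lam k (u j) = δ_{jk}`) with the bounded-error property `‖f - R f‖ ≤ ‖f‖`, the
power function of `μ` equals the supremum of `|μ g|` over the unit ball of
functions with vanishing data. -/
theorem power_function_eq_sup_over_vanishing_data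
    {U : Type*} [NormedAddCommGroup U] [NormedSpace ℝ U]
    (M : ℕ) (lam : Fin M → (U →L[ℝ] ℝ)) (u : Fin M → U)
    (hLag : ∀ j k, lam k (u j) = if j = k then 1 else 0)
    (hbe : ∀ f : U, ‖f - ∑ j, lam j f • u j‖ ≤ ‖f‖)
    (μ : U →L[ℝ] ℝ) :
    sSup {r : ℝ | ∃ f : U, ‖f‖ ≤ 1 ∧ r = |μ f - μ (∑ j, lam j f • u j)|}
      = sSup {r : ℝ | ∃ g : U, ‖g‖ ≤ 1 ∧ (∀ j, lam j g = 0) ∧ r = |μ g|} := by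
  congr 1
  ext r
  constructor
  · rintro ⟨f, hf, rfl⟩
    exact ⟨f - ∑ j, lam j f • u j, (hbe f).trans hf, apply_sub_sum_smul_of_lagrange hLag f,
      by rw [map_sub]⟩
  · rintro ⟨g, hg, hvanish, rfl⟩
    exact ⟨g, hg, by simp [hvanish]⟩
end

section
/- Let a < x < b be real numbers. Then sup over all functions f : ℝ → ℝ that are 1-Lipschitz on [a, b] of |f(x) − ((b−x)·f(a) + (x−a)·f(b))/(b−a)| equals 2·(b−x)·(x−a)/(b−a); the supremum is attained by the tent function f(t) = (x − a) − |t − x|. -/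
/-!
Writing the interpolation error as the convex combination
`((b - x) (f x - f a) + (x - a) (f x - f b)) / (b - a)`, the Lipschitz bounds
`|f x - f a| ≤ x - a` and `|f x - f b| ≤ b - x` give the upper bound. The tent function
peaking at `x` is 1-Lipschitz and meets both bounds with equality, so it attains it.
-/

theorem sub_linear_interp_eq {a b : ℝ} (hab : a ≠ b) (f : ℝ → ℝ) (x : ℝ) :
    f x - ((b - x) * f a + (x - a) * f b) / (b - a)
      = ((b - x) * (f x - f a) + (x - a) * (f x - f b)) / (b - a) := by
  have : b - a ≠ 0 := sub_ne_zero.mpr hab.symm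
  field_simp
  ring

theorem abs_sub_linear_interp_le {a b x L : ℝ} (hax : a ≤ x) (hxb : x ≤ b) (hab : a < b)
    {f : ℝ → ℝ} (hfa : |f x - f a| ≤ L * (x - a)) (hfb : |f x - f b| ≤ L * (b - x)) :
    |f x - ((b - x) * f a + (x - a) * f b) / (b - a)| ≤ 2 * L * (b - x) * (x - a) / (b - a) := by
  have hba : 0 < b - a := sub_pos.mpr hab
  rw [sub_linear_interp_eq hab.ne, abs_div, abs_of_pos hba, div_le_div_iff_of_pos_right hba]
  calc |(b - x) * (f x - f a) + (x - a) * (f x - f b)|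
      ≤ (b - x) * |f x - f a| + (x - a) * |f x - f b| := by
        refine (abs_add_le _ _).trans_eq ?_
        rw [abs_mul, abs_mul, abs_of_nonneg (sub_nonneg.mpr hxb),
          abs_of_nonneg (sub_nonneg.mpr hax)]
    _ ≤ (b - x) * (L * (x - a)) + (x - a) * (L * (b - x)) := by
        gcongr
    _ = 2 * L * (b - x) * (x - a) := by ring

theorem abs_tent_sub_tent_le (c x s t : ℝ) :
    |(c - |s - x|) - (c - |t - x|)| ≤ |s - t| := by
  rw [sub_sub_sub_cancel_left, abs_sub_comm s t]
  simpa using abs_abs_sub_abs_le_abs_sub (t - x) (s - x)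

theorem tent_sub_linear_interp {a b x : ℝ} (hax : a ≤ x) (hxb : x ≤ b) (hab : a < b) :
    |((x - a) - |x - x|) -
        ((b - x) * ((x - a) - |a - x|) + (x - a) * ((x - a) - |b - x|)) / (b - a)|
      = 2 * (b - x) * (x - a) / (b - a) := by
  have hba : 0 < b - a := sub_pos.mpr hab
  rw [sub_self, abs_zero, abs_sub_comm a x, abs_of_nonneg (sub_nonneg.mpr hax),
    abs_of_nonneg (sub_nonneg.mpr hxb)]
  have herr : (x - a - 0) -
      ((b - x) * ((x - a) - (x - a)) + (x - a) * ((x - a) - (b - x))) / (b - a) =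
      2 * (b - x) * (x - a) / (b - a) := by
    field_simp
    ring
  rw [herr, abs_of_nonneg]
  exact div_nonneg (by nlinarith) hba.le

/-- Exact power function of piecewise linear interpolation with respect to the
seminorm `‖f'‖_∞`: the worst-case error at `x` over all `1`-Lipschitz functions
on `[a, b]` equals `2 (b - x) (x - a) / (b - a)`, and the supremum is attained
by the tent function `f t = (x - a) - |t - x|`. -/
theorem linear_interpolation_power_function
    (a b x : ℝ) (hax : a < x) (hxb : x < b) :
    sSup {r : ℝ | ∃ f : ℝ → ℝ,
        (∀ s ∈ Set.Icc a b, ∀ t ∈ Set.Icc a b, |f s - f t| ≤ |s - t|) ∧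
        r = |f x - ((b - x) * f a + (x - a) * f b) / (b - a)|}
      = 2 * (b - x) * (x - a) / (b - a) ∧
    (∀ s ∈ Set.Icc a b, ∀ t ∈ Set.Icc a b,
        |((x - a) - |s - x|) - ((x - a) - |t - x|)| ≤ |s - t|) ∧
    |((x - a) - |x - x|) -
        ((b - x) * ((x - a) - |a - x|) + (x - a) * ((x - a) - |b - x|)) / (b - a)|
      = 2 * (b - x) * (x - a) / (b - a) := by
  have hab : a < b := hax.trans hxb
  have htent := tent_sub_linear_interp hax.le hxb.le hab
  have hxI : x ∈ Set.Icc a b := ⟨hax.le, hxb.le⟩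
  refine ⟨IsGreatest.csSup_eq ⟨⟨_, fun s _ t _ ↦ abs_tent_sub_tent_le _ x s t, htent.symm⟩, ?_⟩,
    fun s _ t _ ↦ abs_tent_sub_tent_le _ x s t, htent⟩
  rintro r ⟨f, hf, rfl⟩
  have hfa := hf x hxI a (Set.left_mem_Icc.mpr hab.le)
  have hfb := hf x hxI b (Set.right_mem_Icc.mpr hab.le)
  rw [abs_of_nonneg (sub_nonneg.mpr hax.le)] at hfa
  rw [abs_sub_comm x b, abs_of_nonneg (sub_nonneg.mpr hxb.le)] at hfb
  simpa using abs_sub_linear_interp_le hax.le hxb.le hab (L := 1) (by simpa using hfa)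
    (by simpa using hfb)
end

section
/- Let A be a symmetric positive definite real M×M matrix, c ∈ ℝ^M, and k ∈ ℝ. Then for every b ∈ ℝ^M: k − 2·⟨b, c⟩ + ⟨b, A·b⟩ ≥ k − ⟨c, A⁻¹·c⟩, with equality if and only if b = A⁻¹·c. In particular, the squared power function of symmetric collocation, obtained by choosing b as the solution of A·b = c, is minimal among the squared power functions k − 2⟨b,c⟩ + ⟨b,Ab⟩ of all (in particular unsymmetric) recovery schemes with the same data functionals. -/
open Matrix

/-! Completing the square: with `x₀ = A⁻¹ c` one has `A x₀ = c`, and symmetry of `A` gives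
`k - 2⟨b, c⟩ + ⟨b, A b⟩ = (k - ⟨c, x₀⟩) + ⟨b - x₀, A (b - x₀)⟩`.
The last term is nonnegative and, by positive definiteness, vanishes only at `b = x₀`. -/

namespace Matrix

variable {n R : Type*} [Fintype n]

theorem IsSymm.sub_dotProduct_mulVec_sub [CommRing R] {A : Matrix n n R} (hA : A.IsSymm)
    (b x : n → R) :
    (b - x) ⬝ᵥ A *ᵥ (b - x) = b ⬝ᵥ A *ᵥ b - 2 * (b ⬝ᵥ A *ᵥ x) + x ⬝ᵥ A *ᵥ x := by
  have hswap : x ⬝ᵥ A *ᵥ b = b ⬝ᵥ A *ᵥ x := by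
    rw [dotProduct_mulVec, ← mulVec_transpose, hA.eq, dotProduct_comm]
  rw [mulVec_sub, sub_dotProduct, dotProduct_sub, dotProduct_sub, hswap]
  ring

variable [CommRing R] [PartialOrder R] [StarRing R] [TrivialStar R] {A : Matrix n n R}

theorem PosSemidef.dotProduct_mulVec_self_nonneg (hA : A.PosSemidef) (x : n → R) :
    0 ≤ x ⬝ᵥ A *ᵥ x := by
  simpa only [star_trivial] using hA.dotProduct_mulVec_nonneg x

theorem PosDef.dotProduct_mulVec_self_eq_zero_iff (hA : A.PosDef) {x : n → R} :
    x ⬝ᵥ A *ᵥ x = 0 ↔ x = 0 := by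
  refine ⟨fun h ↦ ?_, fun h ↦ by rw [h, zero_dotProduct]⟩
  by_contra hx
  simpa only [star_trivial, h, lt_self_iff_false] using hA.dotProduct_mulVec_pos hx

end Matrix

theorem symmetric_collocation_optimal_power_function_general
    (M : ℕ) (A : Matrix (Fin M) (Fin M) ℝ) (hA : A.PosDef)
    (c : Fin M → ℝ) (k : ℝ) (b : Fin M → ℝ) :
    k - c ⬝ᵥ A⁻¹.mulVec c ≤ k - 2 * (b ⬝ᵥ c) + b ⬝ᵥ A.mulVec b ∧
    (k - 2 * (b ⬝ᵥ c) + b ⬝ᵥ A.mulVec b = k - c ⬝ᵥ A⁻¹.mulVec c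
      ↔ b = A⁻¹.mulVec c) := by
  set x₀ := A⁻¹ *ᵥ c
  have hAx₀ : A *ᵥ x₀ = c := by
    rw [mulVec_mulVec, mul_nonsing_inv A (A.isUnit_iff_isUnit_det.mp hA.isUnit), one_mulVec]
  have hsymm : A.IsSymm := isHermitian_iff_isSymm.mp hA.isHermitian
  have hsquare : k - 2 * (b ⬝ᵥ c) + b ⬝ᵥ A *ᵥ b
      = k - c ⬝ᵥ x₀ + (b - x₀) ⬝ᵥ A *ᵥ (b - x₀) := by
    rw [hsymm.sub_dotProduct_mulVec_sub, ← hAx₀, dotProduct_comm (A *ᵥ x₀)]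
    ring
  rw [hsquare, add_eq_left, hA.dotProduct_mulVec_self_eq_zero_iff, sub_eq_zero]
  exact ⟨le_add_of_nonneg_right (hA.posSemidef.dotProduct_mulVec_self_nonneg _), Iff.rfl⟩

/-- Optimality of symmetric collocation: for a symmetric positive definite
matrix `A`, vector `c` and constant `k`, the quadratic form
`k - 2⟨b, c⟩ + ⟨b, A b⟩` is minimized exactly at `b = A⁻¹ c`, with minimal value
`k - ⟨c, A⁻¹ c⟩`. -/
theorem symmetric_collocation_optimal_power_function
    (M : ℕ) (A : Matrix (Fin M) (Fin M) ℝ) (hA : A.PosDef) (hAsymm : A.IsSymm)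
    (c : Fin M → ℝ) (k : ℝ) (b : Fin M → ℝ) :
    k - c ⬝ᵥ A⁻¹.mulVec c ≤ k - 2 * (b ⬝ᵥ c) + b ⬝ᵥ A.mulVec b ∧
    (k - 2 * (b ⬝ᵥ c) + b ⬝ᵥ A.mulVec b = k - c ⬝ᵥ A⁻¹.mulVec c
      ↔ b = A⁻¹.mulVec c) :=
  symmetric_collocation_optimal_power_function_general M A hA c k b
end
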